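/- Let X ↪ Y be an inclusion of simplicial sets and let ν ⊆ μ ⊆ Y₀ be sets of vertices; write ν′ = ν ∩ X₀ and μ′ = μ ∩ X₀. Then the widened inclusion ({0} × Y) ∪ W_{μ′}(X) ↪ W_μ(Y) factors as a composite of two monomorphisms: first the inclusion ({0} × Y) ∪ W_{μ′}(X) ↪ W_ν(Y) ∪ W_{μ′}(X), which is a pushout of the inclusion X ↪ Y widened at ν; and then the inclusion W_ν(Y) ∪ W_{μ′}(X) ↪ W_μ(Y), which is isomorphic in the arrow category to the inclusion W_{ν′}(X) ↪ W_ν(Y) widened at the set of vertices {(0, v) : v ∈ μ ∖ ν}. -/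

import Mathlib

open CategoryTheory Simplicial Opposite Limits

namespace Paper

/-! ## The simplicial set `J`, nerve of the free-living isomorphism -/

/-- The simplicial set `J`, the nerve of the free-living isomorphism `𝕀`:
its `n`-simplices are the tuples `{0,1}^(n+1)` (recorded as `Bool`-valued functions,
`false` being the vertex `0` and `true` the vertex `1`), with all simplicial
operators acting by reindexing. -/
def J : SSet.{0} where
  obj m := Fin (m.unop.len + 1) → Bool
  map f := TypeCat.ofHom fun a => a ∘ f.unop.toOrderHom
  map_id _ := rfl
  map_comp _ _ := rfl

/-- The two vertices `0, 1 : Δ[0] ⟶ J` of `J`; `ptJ false` is the vertex `0` and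
`ptJ true` is the vertex `1`. -/
def ptJ (b : Bool) : Δ[0] ⟶ J where
  app _ := TypeCat.ofHom fun _ => fun _ => b
  naturality _ _ _ := rfl

/-- The boundary `∂J = {0} ∪ {1}` of `J` (two discrete points). -/
def bJ : SSet.{0} where
  obj _ := Bool
  map _ := TypeCat.ofHom fun b => b
  map_id _ := rfl
  map_comp _ _ := rfl

/-- The inclusion `∂J ↪ J`. -/
def bJIncl : bJ ⟶ J where
  app _ := TypeCat.ofHom fun b => fun _ => b
  naturality _ _ _ := rfl

/-! ## Binary products and pushout-products -/

/-- The (pointwise) product of two simplicial sets. -/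
def sprod (X Y : SSet.{0}) : SSet.{0} where
  obj m := X.obj m × Y.obj m
  map f := TypeCat.ofHom fun p => (X.map f p.1, Y.map f p.2)
  map_id m := by
    ext p
    · exact Functor.map_id_apply X m p.1
    · exact Functor.map_id_apply Y m p.2
  map_comp f g := by
    ext p
    · exact Functor.map_comp_apply X f g p.1
    · exact Functor.map_comp_apply Y f g p.2

/-- The product of two morphisms of simplicial sets. -/
def sprodMap {X X' Y Y' : SSet.{0}} (f : X ⟶ X') (g : Y ⟶ Y') : sprod X Y ⟶ sprod X' Y' where
  app m := TypeCat.ofHom fun p => (f.app m p.1, g.app m p.2)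
  naturality m m' φ := by
    ext p
    apply Prod.ext
    · exact NatTrans.naturality_apply f φ p.1
    · exact NatTrans.naturality_apply g φ p.2

/-- The pushout-product `f □ g : (A × Z) ∪ (B × W) ⟶ B × Z` of `f : A ⟶ B` and
`g : W ⟶ Z`, the domain being presented as the pushout `(A × Z) ∪_{A × W} (B × W)`. -/
noncomputable def pp {A B W Z : SSet.{0}} (f : A ⟶ B) (g : W ⟶ Z) :
    pushout (sprodMap (𝟙 A) g) (sprodMap f (𝟙 W)) ⟶ sprod B Z :=
  pushout.desc (sprodMap f (𝟙 Z)) (sprodMap (𝟙 B) g) rfl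

/-! ## Saturated classes of morphisms -/

/-- A class of morphisms is stable under retracts if, whenever `f` is a retract of `g`
in the arrow category, membership of `g` implies membership of `f`. -/
def StableUnderRetracts (T : MorphismProperty SSet.{0}) : Prop :=
  ∀ ⦃X Y X' Y' : SSet.{0}⦄ (f : X ⟶ Y) (g : X' ⟶ Y')
    (i : Arrow.mk f ⟶ Arrow.mk g) (r : Arrow.mk g ⟶ Arrow.mk f),
    i ≫ r = 𝟙 _ → T g → T f

/-- The inclusion functor `Set.Iio i ⥤ ι`. -/
def iioFunctor {ι : Type} [Preorder ι] (i : ι) : Set.Iio i ⥤ ι :=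
  Monotone.functor (f := Subtype.val) (fun _ _ h => h)

/-- The cocone on the restriction of `F : ι ⥤ SSet` to `Set.Iio i` with apex `F.obj i`. -/
def restrictionCocone {ι : Type} [Preorder ι] (F : ι ⥤ SSet.{0}) (i : ι) :
    Cocone (iioFunctor i ⋙ F) where
  pt := F.obj i
  ι :=
    { app := fun j => F.map (homOfLE j.2.le)
      naturality := fun j k h => by
        dsimp [iioFunctor]
        rw [← F.map_comp, Category.comp_id]
        congr 1 }

/-- A class of morphisms is stable under transfinite composition if, for every
well-ordered type `ι` and every functor `F : ι ⥤ SSet` which is continuous at limit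
stages and whose successor maps `F.obj i ⟶ F.obj (i+1)` all belong to the class, and
every colimit cocone `c` on `F`, the transfinite composite `F.obj ⊥ ⟶ c.pt` belongs to
the class. -/
def StableUnderTransfiniteComposition (T : MorphismProperty SSet.{0}) : Prop :=
  ∀ (ι : Type) [LinearOrder ι] [SuccOrder ι] [OrderBot ι] [WellFoundedLT ι]
    (F : ι ⥤ SSet.{0}),
    (∀ i : ι, ¬IsMax i → T (F.map (homOfLE (Order.le_succ i)))) →
    (∀ i : ι, Order.IsSuccLimit i → Nonempty (IsColimit (restrictionCocone F i))) →
    ∀ (c : Cocone F), IsColimit c → T (c.ι.app ⊥)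

/-- A class of morphisms of simplicial sets is saturated if it is closed under
isomorphisms, pushouts, transfinite compositions, and retracts. -/
structure IsSaturated (T : MorphismProperty SSet.{0}) : Prop where
  respectsIso : T.RespectsIso
  stableUnderCobaseChange : T.IsStableUnderCobaseChange
  stableUnderRetracts : StableUnderRetracts T
  stableUnderTransfiniteComposition : StableUnderTransfiniteComposition T

/-- The saturated closure of a class of morphisms: the smallest saturated class
containing it. -/
def satClosure (S : MorphismProperty SSet.{0}) : MorphismProperty SSet.{0} :=
  fun _ _ f => ∀ T : MorphismProperty SSet.{0}, IsSaturated T → S ≤ T → T f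

/-! ## Subcomplexes -/

/-- A subcomplex of a simplicial set. -/
structure Sub (X : SSet.{0}) where
  carrier : ∀ m, Set (X.obj m)
  map_mem : ∀ ⦃m m' : SimplexCategoryᵒᵖ⦄ (f : m ⟶ m') ⦃σ : X.obj m⦄,
    σ ∈ carrier m → X.map f σ ∈ carrier m'

/-- The simplicial set underlying a subcomplex. -/
def Sub.toSSet {X : SSet.{0}} (S : Sub X) : SSet.{0} where
  obj m := S.carrier m
  map f := TypeCat.ofHom fun σ => ⟨X.map f σ.1, S.map_mem f σ.2⟩
  map_id m := by
    ext σ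
    exact Functor.map_id_apply X m σ.1
  map_comp f g := by
    ext σ
    exact Functor.map_comp_apply X f g σ.1

/-- The inclusion of a subcomplex. -/
def Sub.ι {X : SSet.{0}} (S : Sub X) : S.toSSet ⟶ X where
  app _ := TypeCat.ofHom fun σ => σ.1
  naturality _ _ _ := rfl

/-- Containment of subcomplexes. -/
def Sub.Le {X : SSet.{0}} (S T : Sub X) : Prop := ∀ m, S.carrier m ⊆ T.carrier m

/-- The inclusion map associated to a containment of subcomplexes. -/
def Sub.homOfLe {X : SSet.{0}} {S T : Sub X} (h : S.Le T) : S.toSSet ⟶ T.toSSet where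
  app m := TypeCat.ofHom fun σ => ⟨σ.1, h m σ.2⟩
  naturality _ _ _ := rfl

/-- The union of two subcomplexes. -/
def Sub.union {X : SSet.{0}} (S T : Sub X) : Sub X where
  carrier m := S.carrier m ∪ T.carrier m
  map_mem _ _ f _ h := h.imp (fun hs => S.map_mem f hs) (fun ht => T.map_mem f ht)

/-- The intersection of two subcomplexes. -/
def Sub.inter {X : SSet.{0}} (S T : Sub X) : Sub X where
  carrier m := S.carrier m ∩ T.carrier m
  map_mem _ _ f _ h := ⟨S.map_mem f h.1, T.map_mem f h.2⟩

/-- A subcomplex `S` of `X`, viewed as a subcomplex of (the simplicial set underlying)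
another subcomplex `T` of `X`. -/
def Sub.restrict {X : SSet.{0}} (T S : Sub X) : Sub T.toSSet where
  carrier m := {σ | σ.1 ∈ S.carrier m}
  map_mem _ _ f _ h := S.map_mem f h

/-- The (dimension zero) object of `SimplexCategoryᵒᵖ` indexing vertices. -/
abbrev V0 : SimplexCategoryᵒᵖ := Opposite.op (SimplexCategory.mk 0)

/-- The full subcomplex of `X` on a set `ν` of vertices: the simplices all of whose
vertices lie in `ν`. -/
def fullSub (X : SSet.{0}) (ν : Set (X.obj V0)) : Sub X where
  carrier m := {σ | ∀ g : SimplexCategory.mk 0 ⟶ m.unop, X.map g.op σ ∈ ν}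
  map_mem := by
    intro m m' f σ hσ g
    rw [← FunctorToTypes.map_comp_apply]
    exact hσ (g ≫ f.unop)

/-! ## Widenings and widened inclusions -/

/-- The widening `W_ν(X)` of `X` at a set `ν` of vertices: the full subcomplex of
`J × X` on the vertex set `({0} × X₀) ∪ ({1} × ν)`. -/
def wideSub (X : SSet.{0}) (ν : Set (X.obj V0)) : Sub (sprod J X) :=
  fullSub (sprod J X) {p | p.1 0 = true → p.2 ∈ ν}

/-- The subcomplex `{0} × X` of `J × X` (the full subcomplex on the vertices
`{0} × X₀`). -/
def zeroSlice (X : SSet.{0}) : Sub (sprod J X) :=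
  fullSub (sprod J X) {p | p.1 0 = false}

/-- For `A` a subcomplex of `Y`, the subcomplex `J × A` of `J × Y`. -/
def Sub.prodJ {Y : SSet.{0}} (A : Sub Y) : Sub (sprod J Y) where
  carrier m := {p | p.2 ∈ A.carrier m}
  map_mem _ _ f _ h := A.map_mem f h

/-- Given a subcomplex (inclusion) `A = X ⊆ Y` and a set `ν` of vertices of `Y`, the
subcomplex `({0} × Y) ∪ W_{ν ∩ X₀}(X)` of `J × Y`: the domain of the inclusion
`X ↪ Y` widened at `ν`. -/
def widenedSub (Y : SSet.{0}) (A : Sub Y) (ν : Set (Y.obj V0)) : Sub (sprod J Y) :=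
  (zeroSlice Y).union ((wideSub Y (ν ∩ A.carrier V0)).inter A.prodJ)

lemma zeroSlice_le_wideSub (Y : SSet.{0}) (ν : Set (Y.obj V0)) :
    (zeroSlice Y).Le (wideSub Y ν) := by
  intro m σ hσ g h
  exact absurd (hσ g) (by simp [h])

lemma wideSub_mono (Y : SSet.{0}) {ν ν' : Set (Y.obj V0)} (h : ν ⊆ ν') :
    (wideSub Y ν).Le (wideSub Y ν') :=
  fun _ σ hσ g ht => h (hσ g ht)

lemma widenedSub_le (Y : SSet.{0}) (A : Sub Y) (ν : Set (Y.obj V0)) :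
    (widenedSub Y A ν).Le (wideSub Y ν) := by
  refine fun m σ hσ => Or.elim hσ (fun h => ?_) (fun h => ?_)
  · exact zeroSlice_le_wideSub Y ν m h
  · exact wideSub_mono Y Set.inter_subset_left m h.1

/-- The inclusion `X ↪ Y` widened at `ν`: the inclusion
`({0} × Y) ∪ W_{ν ∩ X₀}(X) ↪ W_ν(Y)`. -/
def widenedIncl (Y : SSet.{0}) (A : Sub Y) (ν : Set (Y.obj V0)) :
    (widenedSub Y A ν).toSSet ⟶ (wideSub Y ν).toSSet :=
  Sub.homOfLe (widenedSub_le Y A ν)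

/-- `Wide`: the class of all widened inclusions. -/
def Wide : MorphismProperty SSet.{0} := fun _ _ h =>
  ∃ (Y : SSet.{0}) (A : Sub Y) (ν : Set (Y.obj V0)),
    Arrow.mk h = Arrow.mk (widenedIncl Y A ν)

/-- `Wide^(1)`: the class of inclusions widened at a single vertex. -/
def Wide1 : MorphismProperty SSet.{0} := fun _ _ h =>
  ∃ (Y : SSet.{0}) (A : Sub Y) (v : Y.obj V0),
    Arrow.mk h = Arrow.mk (widenedIncl Y A {v})

/-! ## Narrow vertices -/

/-- A vertex `v` of `Y` is narrow if every simplex of `Y` has at most one vertex equal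
to `v`. -/
def Narrow (Y : SSet.{0}) (v : Y.obj V0) : Prop :=
  ∀ ⦃m : SimplexCategoryᵒᵖ⦄ (σ : Y.obj m) (g g' : SimplexCategory.mk 0 ⟶ m.unop),
    Y.map g.op σ = v → Y.map g'.op σ = v → g = g'

/-- `Wide_nar`: the class of inclusions widened at a narrow set of vertices. -/
def WideNar : MorphismProperty SSet.{0} := fun _ _ h =>
  ∃ (Y : SSet.{0}) (A : Sub Y) (ν : Set (Y.obj V0)),
    (∀ v ∈ ν, Narrow Y v) ∧ Arrow.mk h = Arrow.mk (widenedIncl Y A ν)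

/-- `Wide_nar^(1)`: the class of inclusions widened at a single narrow vertex. -/
def WideNar1 : MorphismProperty SSet.{0} := fun _ _ h =>
  ∃ (Y : SSet.{0}) (A : Sub Y) (v : Y.obj V0),
    Narrow Y v ∧ Arrow.mk h = Arrow.mk (widenedIncl Y A {v})

/-! ## Standard simplices, boundaries, skeleta, iso-horns -/

/-- The unique map to the terminal simplicial set `Δ[0]`. -/
def toPt (X : SSet.{0}) : X ⟶ Δ[0] where
  app m := TypeCat.ofHom fun _ => SSet.stdSimplex.const 0 0 m
  naturality m m' f := by
    ext x
    apply SSet.stdSimplex.objEquiv.injective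
    apply SimplexCategory.Hom.ext
    apply OrderHom.ext
    funext j
    exact Subsingleton.elim (α := Fin 1) _ _

/-- The `i`-th vertex of the standard simplex `Δ[n]`. -/
def vrt (n : ℕ) (i : Fin (n + 1)) : Δ[n].obj V0 :=
  SSet.stdSimplex.const n i V0

/-- The boundary `∂Δ[n]`, as a subcomplex of `Δ[n]`: the simplices which are not
surjective as monotone maps. -/
def bSub (n : ℕ) : Sub Δ[n] where
  carrier m := {σ | ¬Function.Surjective (SSet.stdSimplex.asOrderHom σ)}
  map_mem _ _ f σ hσ h := hσ (Function.Surjective.of_comp h)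

/-- The `k`-skeleton of `Y`, as a subcomplex: the simplices which factor through some
simplex of dimension at most `k`. -/
def skSub (Y : SSet.{0}) (k : ℕ) : Sub Y where
  carrier m := {σ | ∃ (j : ℕ) (_ : j ≤ k) (f : m.unop ⟶ SimplexCategory.mk j)
    (τ : Y.obj (Opposite.op (SimplexCategory.mk j))), Y.map f.op τ = σ}
  map_mem := by
    rintro m m' φ σ ⟨j, hj, f, τ, rfl⟩
    exact ⟨j, hj, φ.unop ≫ f, τ, by rw [← FunctorToTypes.map_comp_apply]; rfl⟩

/-- A `k`-simplex is nondegenerate if it admits no factorization through a simplex of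
strictly smaller dimension. -/
def Nondegenerate (Y : SSet.{0}) {k : ℕ} (σ : Y.obj (Opposite.op (SimplexCategory.mk k))) :
    Prop :=
  ∀ (j : ℕ) (f : SimplexCategory.mk k ⟶ SimplexCategory.mk j)
    (τ : Y.obj (Opposite.op (SimplexCategory.mk j))), Y.map f.op τ = σ → k ≤ j

/-- The iso-horn inclusion `𝕍_i[m+1] ↪ ∇̄_i[m+1]`: the boundary inclusion
`∂Δ[m] ↪ Δ[m]` widened at the single vertex `i`, i.e. the inclusion
`({0} × Δ[m]) ∪ W_i(∂Δ[m]) ↪ W_i(Δ[m])` of the iso-horn into the isoplex. -/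
def isoHornIncl (m : ℕ) (i : Fin (m + 1)) :
    (widenedSub Δ[m] (bSub m) {vrt m i}).toSSet ⟶ (wideSub Δ[m] {vrt m i}).toSSet :=
  widenedIncl Δ[m] (bSub m) {vrt m i}

/-- `IsoHorn`: the class of all iso-horn inclusions. -/
def IsoHorn : MorphismProperty SSet.{0} := fun _ _ h =>
  ∃ (m : ℕ) (i : Fin (m + 1)), Arrow.mk h = Arrow.mk (isoHornIncl m i)

/-! ## The classes `({0} ↪ J) □ Bdry` and `({0} ↪ J) □ Mono` -/

/-- The class `({0} ↪ J) □ Bdry` of pushout-products of the vertex `0 : Δ[0] ⟶ J`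
with the boundary inclusions `∂Δ[n] ↪ Δ[n]`. -/
def ppJ0Bdry : MorphismProperty SSet.{0} := fun _ _ h =>
  ∃ n : ℕ, Arrow.mk h = Arrow.mk (pp (ptJ false) (SSet.boundary n).ι)

/-- The class `({0} ↪ J) □ Mono` of pushout-products of the vertex `0 : Δ[0] ⟶ J`
with all monomorphisms of simplicial sets. -/
def ppJ0Mono : MorphismProperty SSet.{0} := fun _ _ h =>
  ∃ (W Z : SSet.{0}) (g : W ⟶ Z), Mono g ∧ Arrow.mk h = Arrow.mk (pp (ptJ false) g)

/-!
A simplex of `W_μ(Y)` is a simplex `y` of `Y` together with a labelling `c` of its vertices by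
`J`, the label `1` being allowed only on vertices in `μ`. Writing `c = a ∨ b`, where `b` keeps
the labels `1` sitting on vertices in `ν` and `a` those sitting on vertices in `μ ∖ ν`, identifies
`W_μ(Y)` with `W_τ(W_ν(Y))` for `τ = {(0, v) : v ∈ μ ∖ ν}`, and this identification carries
`W_ν(Y) ∪ W_{μ′}(X)` onto `({0} × W_ν(Y)) ∪ W_{τ′}(W_{ν′}(X))`.

The pushout square is levelwise a bicartesian square of sets of simplices: since `ν ⊆ μ`, the
intersection of `({0} × Y) ∪ W_{μ′}(X)` with `W_ν(Y)` is `({0} × Y) ∪ W_{ν′}(X)`.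
-/

def vtx {X : SSet.{0}} {m : SimplexCategoryᵒᵖ} (x : X.obj m) (i : Fin (m.unop.len + 1)) :
    X.obj V0 :=
  X.map (SimplexCategory.const (SimplexCategory.mk 0) m.unop i).op x

lemma vtx_map {X : SSet.{0}} {m m' : SimplexCategoryᵒᵖ} (f : m ⟶ m') (x : X.obj m)
    (i : Fin (m'.unop.len + 1)) : vtx (X.map f x) i = vtx x (f.unop.toOrderHom i) := by
  rw [vtx, ← Functor.map_comp_apply]
  rfl

lemma Sub.vtx_mem {X : SSet.{0}} (A : Sub X) {m : SimplexCategoryᵒᵖ} {x : X.obj m}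
    (hx : x ∈ A.carrier m) (i : Fin (m.unop.len + 1)) : vtx x i ∈ A.carrier V0 :=
  A.map_mem _ hx

lemma mem_fullSub_iff {X : SSet.{0}} {ν : Set (X.obj V0)} {m : SimplexCategoryᵒᵖ}
    (x : X.obj m) : x ∈ (fullSub X ν).carrier m ↔ ∀ i, vtx x i ∈ ν := by
  refine ⟨fun h i => h _, fun h g => ?_⟩
  have hg : g = SimplexCategory.const _ _ (g.toOrderHom 0) := by
    ext j : 3
    rw [Subsingleton.elim (α := Fin 1) j 0]
    rfl
  rw [hg]
  exact h _

namespace Sub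

def mapOfMapsTo {X X' : SSet.{0}} (φ : X ⟶ X') {S : Sub X} {S' : Sub X'}
    (h : ∀ m, Set.MapsTo (φ.app m) (S.carrier m) (S'.carrier m)) : S.toSSet ⟶ S'.toSSet where
  app m := TypeCat.ofHom fun σ => ⟨φ.app m σ.1, h m σ.2⟩
  naturality m m' f := by
    ext σ
    apply Subtype.ext
    exact NatTrans.naturality_apply φ f σ.1

def arrowIsoOfInvOn {X X' : SSet.{0}} (φ : X ⟶ X') (ψ : X' ⟶ X) {S T : Sub X} {S' T' : Sub X'}
    (hST : S.Le T) (hST' : S'.Le T')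
    (hφS : ∀ m, Set.MapsTo (φ.app m) (S.carrier m) (S'.carrier m))
    (hφT : ∀ m, Set.MapsTo (φ.app m) (T.carrier m) (T'.carrier m))
    (hψS : ∀ m, Set.MapsTo (ψ.app m) (S'.carrier m) (S.carrier m))
    (hψT : ∀ m, Set.MapsTo (ψ.app m) (T'.carrier m) (T.carrier m))
    (hinv : ∀ m, Set.InvOn (ψ.app m) (φ.app m) (T.carrier m) (T'.carrier m)) :
    Arrow.mk (homOfLe hST) ≅ Arrow.mk (homOfLe hST') :=
  Arrow.isoMk
    { hom := mapOfMapsTo φ hφS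
      inv := mapOfMapsTo ψ hψS
      hom_inv_id := by ext m σ; exact Subtype.ext ((hinv m).1 (hST m σ.2))
      inv_hom_id := by ext m σ; exact Subtype.ext ((hinv m).2 (hST' m σ.2)) }
    { hom := mapOfMapsTo φ hφT
      inv := mapOfMapsTo ψ hψT
      hom_inv_id := by ext m σ; exact Subtype.ext ((hinv m).1 σ.2)
      inv_hom_id := by ext m σ; exact Subtype.ext ((hinv m).2 σ.2) }
    rfl

lemma isPushout_homOfLe {X : SSet.{0}} {P S T U : Sub X}
    (sq : ∀ m, Lattice.BicartSq (P.carrier m) (S.carrier m) (T.carrier m) (U.carrier m)) :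
    IsPushout (homOfLe fun m => (sq m).le₁₂) (homOfLe fun m => (sq m).le₁₃)
      (homOfLe fun m => (sq m).le₂₄) (homOfLe fun m => (sq m).le₃₄) :=
  IsPushout.of_forall_isPushout_app fun m => Types.isPushout_of_bicartSq (sq m)

end Sub

section Widening

variable {Y : SSet.{0}} {m : SimplexCategoryᵒᵖ}

lemma mem_wideSub_iff {ρ : Set (Y.obj V0)} (σ : (sprod J Y).obj m) :
    σ ∈ (wideSub Y ρ).carrier m ↔ ∀ i, σ.1 i = true → vtx σ.2 i ∈ ρ :=
  mem_fullSub_iff σ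

lemma mem_zeroSlice_iff (σ : (sprod J Y).obj m) :
    σ ∈ (zeroSlice Y).carrier m ↔ ∀ i, σ.1 i = false :=
  mem_fullSub_iff σ

lemma mem_wideSub_inter_prodJ_iff {A : Sub Y} {ρ : Set (Y.obj V0)} (σ : (sprod J Y).obj m) :
    σ ∈ ((wideSub Y (ρ ∩ A.carrier V0)).inter A.prodJ).carrier m ↔
      σ ∈ (wideSub Y ρ).carrier m ∧ σ.2 ∈ A.carrier m := by
  simp only [Sub.inter, Sub.prodJ, Set.mem_inter_iff, Set.mem_ofPred_eq, mem_wideSub_iff]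
  exact ⟨fun ⟨h, hA⟩ => ⟨fun i hi => (h i hi).1, hA⟩,
    fun ⟨h, hA⟩ => ⟨fun i hi => ⟨h i hi, A.vtx_mem hA i⟩, hA⟩⟩

lemma mem_widenedSub_iff {A : Sub Y} {ρ : Set (Y.obj V0)} (σ : (sprod J Y).obj m) :
    σ ∈ (widenedSub Y A ρ).carrier m ↔
      σ ∈ (zeroSlice Y).carrier m ∨ σ ∈ (wideSub Y ρ).carrier m ∧ σ.2 ∈ A.carrier m :=
  or_congr_right (mem_wideSub_inter_prodJ_iff σ)

end Widening

lemma widenedSub_bicartSq (Y : SSet.{0}) (A : Sub Y) {ν μ : Set (Y.obj V0)} (hνμ : ν ⊆ μ)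
    (m : SimplexCategoryᵒᵖ) :
    Lattice.BicartSq ((widenedSub Y A ν).carrier m) ((widenedSub Y A μ).carrier m)
      ((wideSub Y ν).carrier m)
      (((wideSub Y ν).union ((wideSub Y (μ ∩ A.carrier V0)).inter A.prodJ)).carrier m) := by
  have hZ := zeroSlice_le_wideSub Y ν m
  have hW := wideSub_mono Y hνμ m
  constructor <;> ext σ <;>
    simp only [Sub.union, Set.sup_eq_union, Set.inf_eq_inter, Set.mem_union,
      Set.mem_inter_iff, mem_widenedSub_iff, mem_wideSub_inter_prodJ_iff] <;>
    grind

open Classical in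
noncomputable def splitAt (Y : SSet.{0}) (ν : Set (Y.obj V0)) :
    sprod J Y ⟶ sprod J (wideSub Y ν).toSSet where
  app m := TypeCat.ofHom fun σ =>
    (fun i => σ.1 i && !decide (vtx σ.2 i ∈ ν),
      ⟨(fun i => σ.1 i && decide (vtx σ.2 i ∈ ν), σ.2),
        (mem_wideSub_iff _).2 fun i hi => of_decide_eq_true ((Bool.and_eq_true _ _).mp hi).2⟩)
  naturality m m' f := by
    ext σ
    refine Prod.ext (funext fun i => ?_) (Subtype.ext (Prod.ext (funext fun i => ?_) rfl))
    · exact congrArg (fun v => σ.1 _ && !decide (v ∈ ν)) (vtx_map f σ.2 i)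
    · exact congrArg (fun v => σ.1 _ && decide (v ∈ ν)) (vtx_map f σ.2 i)

def mergeAt (Y : SSet.{0}) (ν : Set (Y.obj V0)) :
    sprod J (wideSub Y ν).toSSet ⟶ sprod J Y where
  app _ := TypeCat.ofHom fun p => (fun i => p.1 i || p.2.1.1 i, p.2.1.2)
  naturality _ _ _ := rfl

def zeroVerticesOf (Y : SSet.{0}) (ν ρ : Set (Y.obj V0)) : Set ((wideSub Y ν).toSSet.obj V0) :=
  {q | q.1.1 0 = false ∧ q.1.2 ∈ ρ}

section Splitting

variable {Y : SSet.{0}} {A : Sub Y} {ν μ : Set (Y.obj V0)} {m : SimplexCategoryᵒᵖ}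

lemma mem_wideSub_zeroVerticesOf_iff {ρ : Set (Y.obj V0)}
    (p : (sprod J (wideSub Y ν).toSSet).obj m) :
    p ∈ (wideSub _ (zeroVerticesOf Y ν ρ)).carrier m ↔
      ∀ i, p.1 i = true → p.2.1.1 i = false ∧ vtx p.2.1.2 i ∈ ρ :=
  mem_wideSub_iff p

lemma mergeAt_splitAt (σ : (sprod J Y).obj m) :
    (mergeAt Y ν).app m ((splitAt Y ν).app m σ) = σ := by
  refine Prod.ext (funext fun i => ?_) rfl
  change (σ.1 i && !_ || σ.1 i && _) = σ.1 i
  cases σ.1 i <;> simp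

open Classical in
lemma splitAt_mergeAt {p : (sprod J (wideSub Y ν).toSSet).obj m}
    (hp : p ∈ (wideSub _ (zeroVerticesOf Y ν (μ \ ν))).carrier m) :
    (splitAt Y ν).app m ((mergeAt Y ν).app m p) = p := by
  refine Prod.ext (funext fun i => ?_) (Subtype.ext (Prod.ext (funext fun i => ?_) rfl))
  on_goal 1 => change ((p.1 i || p.2.1.1 i) && !decide (vtx p.2.1.2 i ∈ ν)) = p.1 i
  on_goal 2 => change ((p.1 i || p.2.1.1 i) && decide (vtx p.2.1.2 i ∈ ν)) = p.2.1.1 i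
  all_goals
    have ha := (mem_wideSub_zeroVerticesOf_iff p).1 hp i
    have hb := (mem_wideSub_iff p.2.1).1 p.2.2 i
    cases ha₀ : p.1 i <;> cases hb₀ : p.2.1.1 i <;> simp_all

open Classical in
lemma splitAt_mem_wideSub {σ : (sprod J Y).obj m} (hσ : σ ∈ (wideSub Y μ).carrier m) :
    (splitAt Y ν).app m σ ∈ (wideSub _ (zeroVerticesOf Y ν (μ \ ν))).carrier m := by
  refine (mem_wideSub_zeroVerticesOf_iff _).2 fun i hi => ?_
  change (σ.1 i && !decide (vtx σ.2 i ∈ ν)) = true at hi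
  change (σ.1 i && decide (vtx σ.2 i ∈ ν)) = false ∧ vtx σ.2 i ∈ μ \ ν
  have hμ := (mem_wideSub_iff σ).1 hσ i
  cases hc : σ.1 i <;> simp_all

open Classical in
lemma splitAt_mem_zeroSlice {σ : (sprod J Y).obj m} (hσ : σ ∈ (wideSub Y ν).carrier m) :
    (splitAt Y ν).app m σ ∈ (zeroSlice _).carrier m := by
  refine (mem_zeroSlice_iff _).2 fun i => ?_
  change (σ.1 i && !decide (vtx σ.2 i ∈ ν)) = false
  have hν := (mem_wideSub_iff σ).1 hσ i
  cases hc : σ.1 i <;> simp_all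

lemma mergeAt_mem_wideSub (hνμ : ν ⊆ μ) {p : (sprod J (wideSub Y ν).toSSet).obj m}
    (hp : p ∈ (wideSub _ (zeroVerticesOf Y ν (μ \ ν))).carrier m) :
    (mergeAt Y ν).app m p ∈ (wideSub Y μ).carrier m := by
  refine (mem_wideSub_iff _).2 fun i hi => ?_
  change (p.1 i || p.2.1.1 i) = true at hi
  rcases Bool.or_eq_true_iff.1 hi with ha | hb
  · exact ((mem_wideSub_zeroVerticesOf_iff p).1 hp i ha).2.1
  · exact hνμ ((mem_wideSub_iff p.2.1).1 p.2.2 i hb)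

lemma mergeAt_mem_wideSub_of_mem_zeroSlice {p : (sprod J (wideSub Y ν).toSSet).obj m}
    (hp : p ∈ (zeroSlice _).carrier m) :
    (mergeAt Y ν).app m p ∈ (wideSub Y ν).carrier m := by
  refine (mem_wideSub_iff _).2 fun i hi => ?_
  change (p.1 i || p.2.1.1 i) = true at hi
  rw [(mem_zeroSlice_iff p).1 hp i, Bool.false_or] at hi
  exact (mem_wideSub_iff p.2.1).1 p.2.2 i hi

lemma splitAt_mem_widenedSub {σ : (sprod J Y).obj m}
    (hσ : σ ∈ ((wideSub Y ν).union ((wideSub Y (μ ∩ A.carrier V0)).inter A.prodJ)).carrier m) :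
    (splitAt Y ν).app m σ ∈ (widenedSub (wideSub Y ν).toSSet
      ((wideSub Y ν).restrict ((wideSub Y (ν ∩ A.carrier V0)).inter A.prodJ))
      (zeroVerticesOf Y ν (μ \ ν))).carrier m := by
  rw [mem_widenedSub_iff]
  rcases hσ with hν | hμA
  · exact Or.inl (splitAt_mem_zeroSlice hν)
  · obtain ⟨hμ, hA⟩ := (mem_wideSub_inter_prodJ_iff σ).1 hμA
    exact Or.inr ⟨splitAt_mem_wideSub hμ,
      (mem_wideSub_inter_prodJ_iff _).2 ⟨((splitAt Y ν).app m σ).2.2, hA⟩⟩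

lemma mergeAt_mem_union (hνμ : ν ⊆ μ) {p : (sprod J (wideSub Y ν).toSSet).obj m}
    (hp : p ∈ (widenedSub (wideSub Y ν).toSSet
      ((wideSub Y ν).restrict ((wideSub Y (ν ∩ A.carrier V0)).inter A.prodJ))
      (zeroVerticesOf Y ν (μ \ ν))).carrier m) :
    (mergeAt Y ν).app m p ∈
      ((wideSub Y ν).union ((wideSub Y (μ ∩ A.carrier V0)).inter A.prodJ)).carrier m := by
  rcases (mem_widenedSub_iff p).1 hp with h0 | ⟨hμ, hA⟩
  · exact Or.inl (mergeAt_mem_wideSub_of_mem_zeroSlice h0)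
  · exact Or.inr ((mem_wideSub_inter_prodJ_iff _).2
      ⟨mergeAt_mem_wideSub hνμ hμ, ((mem_wideSub_inter_prodJ_iff p.2.1).1 hA).2⟩)

end Splitting

noncomputable def wideSubUnionArrowIso (Y : SSet.{0}) (A : Sub Y) {ν μ : Set (Y.obj V0)}
    (hνμ : ν ⊆ μ)
    (h : ((wideSub Y ν).union ((wideSub Y (μ ∩ A.carrier V0)).inter A.prodJ)).Le
      (wideSub Y μ)) :
    Arrow.mk (Sub.homOfLe h) ≅ Arrow.mk (widenedIncl (wideSub Y ν).toSSet
      ((wideSub Y ν).restrict ((wideSub Y (ν ∩ A.carrier V0)).inter A.prodJ))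
      (zeroVerticesOf Y ν (μ \ ν))) :=
  Sub.arrowIsoOfInvOn (splitAt Y ν) (mergeAt Y ν) h (widenedSub_le _ _ _)
    (fun _ _ => splitAt_mem_widenedSub) (fun _ _ => splitAt_mem_wideSub)
    (fun _ _ => mergeAt_mem_union hνμ) (fun _ _ => mergeAt_mem_wideSub hνμ)
    (fun _ => ⟨fun σ _ => mergeAt_splitAt σ, fun _ hp => splitAt_mergeAt hp⟩)

/-- Given an inclusion `X ↪ Y` (a subcomplex `A` of `Y`) and vertex sets
`ν ⊆ μ ⊆ Y₀`, with `ν′ = ν ∩ X₀` and `μ′ = μ ∩ X₀`, the widened inclusion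
`({0} × Y) ∪ W_{μ′}(X) ↪ W_μ(Y)` factors as the inclusion
`({0} × Y) ∪ W_{μ′}(X) ↪ W_ν(Y) ∪ W_{μ′}(X)`, which is a pushout of the inclusion
`X ↪ Y` widened at `ν`, followed by the inclusion `W_ν(Y) ∪ W_{μ′}(X) ↪ W_μ(Y)`, which
is isomorphic in the arrow category to the inclusion `W_{ν′}(X) ↪ W_ν(Y)` widened at
the vertex set `{(0, v) : v ∈ μ ∖ ν}`. -/
theorem widenedIncl_factorization (Y : SSet.{0}) (A : Sub Y) (ν μ : Set (Y.obj V0))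
    (hνμ : ν ⊆ μ) :
    ∃ (h₁ : (widenedSub Y A μ).Le
        ((wideSub Y ν).union ((wideSub Y (μ ∩ A.carrier V0)).inter A.prodJ)))
      (h₂ : ((wideSub Y ν).union ((wideSub Y (μ ∩ A.carrier V0)).inter A.prodJ)).Le
        (wideSub Y μ)),
      Sub.homOfLe h₁ ≫ Sub.homOfLe h₂ = widenedIncl Y A μ ∧
      (∃ (u : (widenedSub Y A ν).toSSet ⟶ (widenedSub Y A μ).toSSet)
        (v : (wideSub Y ν).toSSet ⟶
          ((wideSub Y ν).union ((wideSub Y (μ ∩ A.carrier V0)).inter A.prodJ)).toSSet),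
        IsPushout u (widenedIncl Y A ν) (Sub.homOfLe h₁) v) ∧
      Nonempty (Arrow.mk (Sub.homOfLe h₂) ≅
        Arrow.mk (widenedIncl (wideSub Y ν).toSSet
          ((wideSub Y ν).restrict ((wideSub Y (ν ∩ A.carrier V0)).inter A.prodJ))
          {q | q.1.1 0 = false ∧ q.1.2 ∈ μ \ ν})) := by
  have sq := widenedSub_bicartSq Y A hνμ
  have h₂ : ((wideSub Y ν).union ((wideSub Y (μ ∩ A.carrier V0)).inter A.prodJ)).Le
      (wideSub Y μ) := fun m σ hσ =>
    hσ.elim (fun h => wideSub_mono Y hνμ m h)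
      fun h => wideSub_mono Y Set.inter_subset_left m h.1
  exact ⟨fun m => (sq m).le₂₄, h₂, rfl, ⟨_, _, Sub.isPushout_homOfLe sq⟩,
    ⟨wideSubUnionArrowIso Y A hνμ h₂⟩⟩

end Paper
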